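/- arXiv:2008.04592 — 2 statements merged into one kernel-verified Lean document; each statement's English description precedes it below -/
import Mathlib

section
/- Let q = p^ℓ with p an odd prime, ℓ ≥ 1, d ≥ 3, and E ⊆ ℤ_q^d. If |E| > (ℓ+1)·q^{(2ℓ−1)d/(2ℓ) + 1/ℓ}, then Π(E) = {x·y : x, y ∈ E} equals all of ℤ_q. -/
open Finset

noncomputable def chi (n : ℕ) (t : ZMod n) : ℂ :=
  Complex.exp (2 * Real.pi * Complex.I * (t.val : ℂ) / (n : ℂ))

def dot {n d : ℕ} (x y : Fin d → ZMod n) : ZMod n := ∑ i, x i * y i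

def nrm {n d : ℕ} (z : Fin d → ZMod n) : ZMod n := ∑ i, z i ^ 2

noncomputable def ft (n d : ℕ) [NeZero n] (f : (Fin d → ZMod n) → ℂ)
    (m : Fin d → ZMod n) : ℂ :=
  (n : ℂ)⁻¹ ^ d * ∑ x : Fin d → ZMod n, f x * chi n (-(dot x m))

section aux
variable {n : ℕ} [NeZero n]

lemma chi_eq (t : ZMod n) : chi n t = Complex.exp (2 * Real.pi * Complex.I / n) ^ (t.val) := by
  rw [← Complex.exp_nat_mul, chi]
  ring_nf

lemma omega_pow_n : Complex.exp (2 * Real.pi * Complex.I / (n:ℂ)) ^ n = 1 := by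
  rw [← Complex.exp_nat_mul]
  have hn : (n:ℂ) ≠ 0 := Nat.cast_ne_zero.2 (NeZero.ne n)
  rw [show (n:ℂ) * (2 * Real.pi * Complex.I / n) = 2 * Real.pi * Complex.I by field_simp]
  exact Complex.exp_two_pi_mul_I

lemma chi_zero : chi n 0 = 1 := by
  simp [chi]

lemma chi_add (a b : ZMod n) : chi n (a + b) = chi n a * chi n b := by
  rw [chi_eq, chi_eq, chi_eq, ← pow_add, ZMod.val_add,
    pow_eq_pow_mod (a.val + b.val) omega_pow_n]

lemma chi_abs (t : ZMod n) : ‖chi n t‖ = 1 := by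
  rw [chi, show 2 * (Real.pi:ℂ) * Complex.I * (t.val:ℂ) / (n:ℂ)
      = ((2 * Real.pi * t.val / n : ℝ) : ℂ) * Complex.I by push_cast; ring]
  exact Complex.norm_exp_ofReal_mul_I _

lemma chi_ne_zero (t : ZMod n) : chi n t ≠ 0 := by
  intro h
  have := chi_abs t
  rw [h] at this
  simp at this

lemma chi_mul_neg (t : ZMod n) : chi n t * chi n (-t) = 1 := by
  rw [← chi_add]; simp [chi_zero]

lemma chi_conj (t : ZMod n) : (starRingEnd ℂ) (chi n t) = chi n (-t) := by
  have h1 : chi n t * chi n (-t) = 1 := chi_mul_neg t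
  have h2 : (starRingEnd ℂ) (chi n t) * chi n t = 1 := by
    rw [mul_comm, Complex.mul_conj]
    norm_cast
    rw [← Complex.sq_norm, chi_abs]; norm_num
  rw [eq_inv_of_mul_eq_one_left h2, (eq_inv_of_mul_eq_one_right h1).symm]

lemma chi_finsum {ι : Type*} (s : Finset ι) (f : ι → ZMod n) :
    chi n (∑ i ∈ s, f i) = ∏ i ∈ s, chi n (f i) := by
  induction s using Finset.cons_induction with
  | empty => simp [chi_zero]
  | cons a s ha ih => rw [Finset.sum_cons, Finset.prod_cons, chi_add, ih]


lemma zmod_sum_pow (z : ℂ) : ∑ s : ZMod n, z ^ s.val = ∑ k ∈ Finset.range n, z ^ k := by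
  apply Finset.sum_nbij' (i := fun (s : ZMod n) => s.val) (j := fun k => (k : ZMod n))
  · intro a _; exact Finset.mem_range.2 (ZMod.val_lt a)
  · intro a _; exact Finset.mem_univ _
  · intro a _; exact ZMod.natCast_rightInverse a
  · intro a ha; exact ZMod.val_cast_of_lt (Finset.mem_range.1 ha)
  · intro a _; rfl

lemma sum_chi (u : ZMod n) : ∑ s : ZMod n, chi n (s * u) = if u = 0 then (n:ℂ) else 0 := by
  have h1 : ∀ s : ZMod n, chi n (s * u) = (chi n u) ^ s.val := by
    intro s
    rw [chi_eq, chi_eq, ← pow_mul, ZMod.val_mul,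
      ← pow_eq_pow_mod (s.val * u.val) (omega_pow_n (n := n)), mul_comm s.val u.val]
  rw [Finset.sum_congr rfl (fun s _ => h1 s), zmod_sum_pow]
  by_cases hu : u = 0
  · simp [hu, chi_zero]
  · rw [if_neg hu]
    have hprim := Complex.isPrimitiveRoot_exp n (NeZero.ne n)
    have hz1 : chi n u ≠ 1 := by
      intro h
      rw [chi_eq, hprim.pow_eq_one_iff_dvd] at h
      have := ZMod.val_lt u
      have hv0 : u.val = 0 := by
        rcases Nat.eq_zero_or_pos u.val with h0 | h0
        · exact h0
        · exact absurd (Nat.le_of_dvd h0 h) (by omega)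
      exact hu (by rwa [ZMod.val_eq_zero] at hv0)
    have hzn : (chi n u) ^ n = 1 := by
      rw [chi_eq, ← pow_mul, mul_comm u.val n, pow_mul, omega_pow_n (n := n), one_pow]
    rw [geom_sum_eq hz1, hzn, sub_self, zero_div]

open Finset in
lemma card_dvd_val_le (m : ℕ) (hm : 0 < m) (hmn : m ∣ n) :
    (univ.filter fun c : ZMod n => m ∣ c.val).card ≤ n / m := by
  classical
  rw [← Finset.card_range (n / m)]
  apply Finset.card_le_card_of_injOn (fun c => c.val / m)
  · intro c hc
    simp only [Finset.mem_coe, Finset.mem_filter, Finset.mem_univ, true_and] at hc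
    obtain ⟨k, hk⟩ := hc
    have hlt : c.val < n := ZMod.val_lt c
    have : m * k < m * (n / m) := by
      rw [Nat.mul_div_cancel' hmn]; omega
    have hkk : k < n / m := lt_of_mul_lt_mul_left this (Nat.zero_le m)
    simp [hk, Nat.mul_div_cancel_left k hm, hkk]
  · intro a ha b hb hab
    simp only [Finset.coe_filter, Set.mem_setOf_eq] at ha hb
    apply ZMod.val_injective
    rw [← Nat.div_mul_cancel ha.2, ← Nat.div_mul_cancel hb.2]
    simp only at hab
    rw [hab]

open Finset in
lemma ker_card_le (s : ZMod n) :
    (univ.filter fun c : ZMod n => s * c = 0).card ≤ Nat.gcd s.val n := by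
  classical
  set g := Nat.gcd s.val n with hg
  have hn : 0 < n := Nat.pos_of_ne_zero (NeZero.ne n)
  have hgpos : 0 < g := Nat.gcd_pos_of_pos_right _ hn
  have hgdvd : g ∣ n := Nat.gcd_dvd_right _ _
  have key : ∀ c : ZMod n, s * c = 0 → (n / g) ∣ c.val := by
    intro c hc
    have h1 : n ∣ s.val * c.val := by
      apply Nat.dvd_of_mod_eq_zero
      have := ZMod.val_mul s c
      rw [hc, ZMod.val_zero] at this
      omega
    obtain ⟨a, ha⟩ : g ∣ s.val := Nat.gcd_dvd_left _ _
    obtain ⟨b, hb⟩ : g ∣ n := hgdvd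
    have h2 : b ∣ a * c.val := by
      have h3 : g * b ∣ g * (a * c.val) := by
        rw [← hb]
        obtain ⟨w, hw⟩ := h1
        exact ⟨w, by rw [← mul_assoc, ← ha, ← hw]⟩
      exact (mul_dvd_mul_iff_left (by omega : g ≠ 0)).1 h3
    have hb' : b = n / g := by rw [hb, Nat.mul_div_cancel_left _ hgpos]
    have ha' : a = s.val / g := by rw [ha, Nat.mul_div_cancel_left _ hgpos]
    have hco : Nat.Coprime (n / g) (s.val / g) :=
      (Nat.coprime_div_gcd_div_gcd hgpos).symm
    rw [hb', ha'] at h2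
    exact hco.dvd_of_dvd_mul_left h2
  calc (univ.filter fun c : ZMod n => s * c = 0).card
      ≤ (univ.filter fun c : ZMod n => (n / g) ∣ c.val).card := by
        apply Finset.card_le_card
        intro c hc
        simp only [Finset.mem_filter, Finset.mem_univ, true_and] at hc ⊢
        exact key c hc
    _ ≤ n / (n / g) := card_dvd_val_le _ (Nat.div_pos (Nat.le_of_dvd hn hgdvd) hgpos)
        (Nat.div_dvd_of_dvd hgdvd)
    _ = g := Nat.div_div_self hgdvd (by omega)

lemma dot_sub {d : ℕ} (x y y' : Fin d → ZMod n) :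
    dot x y - dot x y' = dot x (y - y') := by
  simp [dot, mul_sub, Finset.sum_sub_distrib]

open Finset in
lemma per_s_bound {d : ℕ} (E : Finset (Fin d → ZMod n)) (t s : ZMod n) :
    ‖∑ x ∈ E, ∑ y ∈ E, chi n (s * (dot x y - t))‖
      ≤ (E.card : ℝ) * Real.sqrt (((n : ℝ) *
          ((univ.filter fun c : ZMod n => s * c = 0).card : ℝ)) ^ d) := by
  classical
  set K : ℝ := ((univ.filter fun c : ZMod n => s * c = 0).card : ℝ) with hK
  have hK0 : 0 ≤ K := Nat.cast_nonneg _
  have hn0 : (0:ℝ) ≤ (n:ℝ) := Nat.cast_nonneg _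
  set S : (Fin d → ZMod n) → ℂ := fun x => ∑ y ∈ E, chi n (s * dot x y) with hS
  -- Step 1: rewrite each inner sum
  have step1 : ∀ x, (∑ y ∈ E, chi n (s * (dot x y - t))) = S x * chi n (-(s*t)) := by
    intro x
    rw [hS, Finset.sum_mul]
    apply Finset.sum_congr rfl
    intro y _
    rw [← chi_add]
    ring_nf
  have step2 : ‖∑ x ∈ E, ∑ y ∈ E, chi n (s * (dot x y - t))‖
      ≤ ∑ x ∈ E, ‖S x‖ := by
    calc ‖∑ x ∈ E, ∑ y ∈ E, chi n (s * (dot x y - t))‖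
        ≤ ∑ x ∈ E, ‖∑ y ∈ E, chi n (s * (dot x y - t))‖ :=
          norm_sum_le _ _
      _ = ∑ x ∈ E, ‖S x‖ := by
          apply Finset.sum_congr rfl
          intro x _
          rw [step1 x, norm_mul, chi_abs, mul_one]
  -- the pair-count
  set C : ℕ := ((E ×ˢ E).filter fun yz : (Fin d → ZMod n) × (Fin d → ZMod n) =>
      ∀ i, s * (yz.1 i - yz.2 i) = 0).card with hC
  -- Step 4: second moment identity
  have step4 : ∑ x : Fin d → ZMod n, (‖S x‖)^2 = (n:ℝ)^d * C := by
    have key : ∑ x : Fin d → ZMod n, (S x * (starRingEnd ℂ) (S x)) = (n:ℂ)^d * C := by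
      have expand : ∀ x, S x * (starRingEnd ℂ) (S x)
          = ∑ y ∈ E, ∑ y' ∈ E, chi n (s * dot x (y - y')) := by
        intro x
        rw [hS, map_sum, Finset.sum_mul]
        apply Finset.sum_congr rfl
        intro y _
        rw [Finset.mul_sum]
        apply Finset.sum_congr rfl
        intro y' _
        rw [chi_conj, ← chi_add]
        congr 1
        rw [← dot_sub]
        ring
      calc ∑ x : Fin d → ZMod n, (S x * (starRingEnd ℂ) (S x))
          = ∑ x : Fin d → ZMod n, ∑ y ∈ E, ∑ y' ∈ E, chi n (s * dot x (y - y')) :=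
            Finset.sum_congr rfl (fun x _ => expand x)
        _ = ∑ y ∈ E, ∑ y' ∈ E, ∑ x : Fin d → ZMod n, chi n (s * dot x (y - y')) := by
            rw [Finset.sum_comm]
            apply Finset.sum_congr rfl
            intro y _
            rw [Finset.sum_comm]
        _ = ∑ y ∈ E, ∑ y' ∈ E,
              (if (∀ i, s * (y i - y' i) = 0) then ((n:ℂ))^d else 0) := by
            apply Finset.sum_congr rfl; intro y _
            apply Finset.sum_congr rfl; intro y' _
            have inner : ∀ x : Fin d → ZMod n, chi n (s * dot x (y - y'))
                = ∏ i, chi n (s * (x i * (y i - y' i))) := by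
              intro x
              rw [dot, Finset.mul_sum, chi_finsum]
              apply Finset.prod_congr rfl
              intro i _
              congr 1
            rw [Finset.sum_congr rfl (fun x _ => inner x), ← Fintype.piFinset_univ,
              ← Finset.prod_univ_sum (fun _ : Fin d => univ)
                (fun i a => chi n (s * (a * (y i - y' i))))]
            have factor : ∀ i : Fin d, (∑ a : ZMod n, chi n (s * (a * (y i - y' i))))
                = (if s * (y i - y' i) = 0 then (n:ℂ) else 0) := by
              intro i
              rw [← sum_chi (s * (y i - y' i))]
              apply Finset.sum_congr rfl
              intro a _
              congr 1
              ring
            rw [Finset.prod_congr rfl (fun i _ => factor i)]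
            by_cases h : ∀ i, s * (y i - y' i) = 0
            · rw [if_pos h]
              rw [Finset.prod_congr rfl (fun i _ => if_pos (h i)), Finset.prod_const]
              simp
            · rw [if_neg h]
              push_neg at h
              obtain ⟨i, hi⟩ := h
              exact Finset.prod_eq_zero (Finset.mem_univ i) (if_neg hi)
        _ = (n:ℂ)^d * C := by
            rw [← Finset.sum_product']
            rw [Finset.sum_ite, Finset.sum_const, Finset.sum_const_zero, add_zero, hC]
            simp [mul_comm]
    have lhs_eq : ∑ x : Fin d → ZMod n, (S x * (starRingEnd ℂ) (S x))
        = ((∑ x : Fin d → ZMod n, (‖S x‖)^2 : ℝ) : ℂ) := by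
      push_cast
      apply Finset.sum_congr rfl
      intro x _
      rw [Complex.mul_conj]
      norm_cast
      exact (Complex.sq_norm _).symm
    rw [lhs_eq] at key
    exact_mod_cast key
  -- Step 5: C ≤ E.card * K^d
  have step5 : (C:ℝ) ≤ (E.card : ℝ) * K^d := by
    have hC' : C ≤ E.card * ((univ.filter fun c : ZMod n => s * c = 0).card)^d := by
      rw [hC]
      have hinj := Finset.card_le_card_of_injOn
        (f := fun yz : (Fin d → ZMod n) × (Fin d → ZMod n) =>
          (yz.1, fun i => yz.1 i - yz.2 i))
        (s := (E ×ˢ E).filter fun yz => ∀ i, s * (yz.1 i - yz.2 i) = 0)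
        (t := E ×ˢ Fintype.piFinset (fun _ : Fin d => univ.filter fun c : ZMod n => s * c = 0))
        ?_ ?_
      · refine hinj.trans (le_of_eq ?_)
        rw [Finset.card_product, Fintype.card_piFinset]
        rw [Finset.prod_const, Finset.card_univ, Fintype.card_fin]
      · intro yz hyz
        simp only [Finset.mem_coe, Finset.mem_filter, Finset.mem_product] at hyz
        simp only [Finset.mem_coe, Finset.mem_product, Fintype.mem_piFinset, Finset.mem_filter,
          Finset.mem_univ, true_and]
        exact ⟨hyz.1.1, fun i => hyz.2 i⟩
      · intro a ha b hb hab
        simp only [Prod.mk.injEq] at hab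
        obtain ⟨h1, h2⟩ := hab
        have h3 : ∀ i, a.1 i - a.2 i = b.1 i - b.2 i := fun i => congrFun h2 i
        have h4 : a.2 = b.2 := by
          funext i
          have := h3 i
          rw [h1] at this
          exact (sub_right_injective this)
        exact Prod.ext h1 h4
    calc (C:ℝ) ≤ (E.card : ℝ) * (((univ.filter fun c : ZMod n => s * c = 0).card : ℝ))^d := by
          exact_mod_cast hC'
      _ = (E.card : ℝ) * K^d := by rw [hK]
  -- Step 6: combine
  have cauchy : (∑ x ∈ E, ‖S x‖)^2
      ≤ (E.card:ℝ) * ∑ x ∈ E, (‖S x‖)^2 := by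
    have h := Finset.sum_mul_sq_le_sq_mul_sq E (fun _ => (1:ℝ)) (fun x => ‖S x‖)
    simpa using h
  have hsub : ∑ x ∈ E, (‖S x‖)^2
      ≤ ∑ x : Fin d → ZMod n, (‖S x‖)^2 :=
    Finset.sum_le_sum_of_subset_of_nonneg (Finset.subset_univ E) (fun _ _ _ => sq_nonneg _)
  have h1 : (∑ x ∈ E, ‖S x‖)^2 ≤ (E.card:ℝ)^2 * ((n:ℝ)*K)^d := by
    calc (∑ x ∈ E, ‖S x‖)^2
        ≤ (E.card:ℝ) * ∑ x ∈ E, (‖S x‖)^2 := cauchy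
      _ ≤ (E.card:ℝ) * ∑ x : Fin d → ZMod n, (‖S x‖)^2 := by
          apply mul_le_mul_of_nonneg_left hsub (Nat.cast_nonneg _)
      _ = (E.card:ℝ) * ((n:ℝ)^d * C) := by rw [step4]
      _ ≤ (E.card:ℝ) * ((n:ℝ)^d * ((E.card : ℝ) * K^d)) := by
          apply mul_le_mul_of_nonneg_left _ (Nat.cast_nonneg _)
          apply mul_le_mul_of_nonneg_left step5 (pow_nonneg hn0 d)
      _ = (E.card:ℝ)^2 * ((n:ℝ)*K)^d := by rw [mul_pow]; ring
  have habs : (0:ℝ) ≤ ∑ x ∈ E, ‖S x‖ :=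
    Finset.sum_nonneg (fun x _ => norm_nonneg _)
  refine step2.trans ?_
  rw [← Real.sqrt_sq habs]
  calc Real.sqrt ((∑ x ∈ E, ‖S x‖)^2)
      ≤ Real.sqrt ((E.card:ℝ)^2 * ((n:ℝ)*K)^d) := Real.sqrt_le_sqrt h1
    _ = (E.card:ℝ) * Real.sqrt (((n:ℝ)*K)^d) := by
        rw [Real.sqrt_mul (sq_nonneg _), Real.sqrt_sq (Nat.cast_nonneg _)]

open Finset in
lemma count_identity {d : ℕ} (E : Finset (Fin d → ZMod n)) (t : ZMod n) :
    (n : ℂ) * (((E ×ˢ E).filter fun z : (Fin d → ZMod n) × (Fin d → ZMod n) =>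
        dot z.1 z.2 = t).card : ℂ)
      = ∑ s : ZMod n, ∑ x ∈ E, ∑ y ∈ E, chi n (s * (dot x y - t)) := by
  classical
  symm
  have swap : ∑ s : ZMod n, ∑ x ∈ E, ∑ y ∈ E, chi n (s * (dot x y - t))
      = ∑ x ∈ E, ∑ y ∈ E, ∑ s : ZMod n, chi n (s * (dot x y - t)) := by
    rw [Finset.sum_comm]
    exact Finset.sum_congr rfl (fun x _ => Finset.sum_comm)
  rw [swap]
  have inner : ∀ (x y : Fin d → ZMod n), (∑ s : ZMod n, chi n (s * (dot x y - t)))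
      = if dot x y = t then (n:ℂ) else 0 := by
    intro x y
    rw [sum_chi (dot x y - t)]
    simp [sub_eq_zero]
  calc ∑ x ∈ E, ∑ y ∈ E, ∑ s : ZMod n, chi n (s * (dot x y - t))
      = ∑ z ∈ E ×ˢ E, (if dot z.1 z.2 = t then (n:ℂ) else 0) := by
        rw [Finset.sum_product]
        exact Finset.sum_congr rfl fun x _ => Finset.sum_congr rfl fun y _ => inner x y
    _ = (n : ℂ) * (((E ×ˢ E).filter fun z : (Fin d → ZMod n) × (Fin d → ZMod n) =>
          dot z.1 z.2 = t).card : ℂ) := by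
        rw [Finset.sum_ite, Finset.sum_const_zero, add_zero, Finset.sum_const]
        simp [mul_comm]

end aux

open Finset in
lemma fiber_sum_bound (p ℓ d : ℕ) [NeZero (p^ℓ)] (hp : p.Prime) (hl : 1 ≤ ℓ) (hd : 3 ≤ d) :
    ∑ s ∈ (univ : Finset (ZMod (p^ℓ))).erase 0,
        Real.sqrt ((((p^ℓ : ℕ) : ℝ) *
          ((univ.filter fun c : ZMod (p^ℓ) => s * c = 0).card : ℝ)) ^ d)
      ≤ (ℓ : ℝ) * (p:ℝ) ^ ((1:ℝ) + (2*(ℓ:ℝ)-1)*(d:ℝ)/2) := by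
  classical
  have hp1 : 1 < p := hp.one_lt
  have hp0 : (0:ℝ) < (p:ℝ) := by positivity
  have hp1' : (1:ℝ) ≤ (p:ℝ) := by exact_mod_cast hp1.le
  set n : ℕ := p ^ ℓ with hn
  set j : ZMod n → ℕ := fun s => (Nat.gcd s.val n).factorization p with hj
  have hgcd : ∀ s : ZMod n, s ≠ 0 → Nat.gcd s.val n = p ^ (j s) ∧ j s < ℓ := by
    intro s hs
    obtain ⟨k, hkl, hk⟩ := (Nat.dvd_prime_pow hp).1 (Nat.gcd_dvd_right s.val n)
    have hjk : j s = k := by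
      rw [hj]; simp only; rw [hk, hp.factorization_pow]
      simp
    refine ⟨by rw [hjk, ← hk], ?_⟩
    rw [hjk]
    rcases Nat.lt_or_ge k ℓ with h | h
    · exact h
    · exfalso
      have hkk : k = ℓ := le_antisymm hkl h
      have hsv : s.val ≠ 0 := fun h0 => hs (by rwa [ZMod.val_eq_zero] at h0)
      have hdv : n ∣ s.val := by
        have : n ∣ Nat.gcd s.val n := by rw [hk, hkk, hn]
        exact this.trans (Nat.gcd_dvd_left _ _)
      exact absurd (Nat.le_of_dvd (Nat.pos_of_ne_zero hsv) hdv) (not_le.2 (ZMod.val_lt s))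
  set f : ZMod n → ℝ := fun s =>
    Real.sqrt (((n:ℝ) * ((univ.filter fun c : ZMod n => s * c = 0).card : ℝ)) ^ d) with hf
  have hmono : ∀ s ∈ (univ : Finset (ZMod n)).erase 0,
      f s ≤ Real.sqrt (((n:ℝ) * (p:ℝ)^(j s)) ^ d) := by
    intro s hs
    apply Real.sqrt_le_sqrt
    apply pow_le_pow_left₀ (by positivity)
    apply mul_le_mul_of_nonneg_left _ (Nat.cast_nonneg _)
    have h1 := ker_card_le (n := n) s
    have h2 := (hgcd s (Finset.mem_erase.1 hs).1).1
    calc (((univ.filter fun c : ZMod n => s * c = 0).card : ℝ))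
        ≤ (Nat.gcd s.val n : ℝ) := by exact_mod_cast h1
      _ = (p:ℝ)^(j s) := by rw [h2]; push_cast; ring
  have maps : ∀ s ∈ (univ : Finset (ZMod n)).erase 0, j s ∈ Finset.range ℓ := fun s hs =>
    Finset.mem_range.2 (hgcd s (Finset.mem_erase.1 hs).1).2
  have keyineq : ∀ jj ∈ Finset.range ℓ,
      ((p:ℝ)^(ℓ-jj : ℕ)) * Real.sqrt (((n:ℝ)*(p:ℝ)^jj)^d)
        ≤ (p:ℝ) ^ ((1:ℝ) + (2*(ℓ:ℝ)-1)*(d:ℝ)/2) := by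
    intro jj hjj
    have hjl : jj < ℓ := Finset.mem_range.1 hjj
    have e1 : ((n:ℝ) * (p:ℝ)^jj) = (p:ℝ)^(ℓ + jj : ℕ) := by
      rw [hn, pow_add]; push_cast; ring
    have e2 : Real.sqrt (((n:ℝ)*(p:ℝ)^jj)^d) = (p:ℝ) ^ ((((ℓ+jj)*d : ℕ) : ℝ) / 2) := by
      rw [e1, ← pow_mul, Real.sqrt_eq_rpow, ← Real.rpow_natCast (p:ℝ) ((ℓ+jj)*d),
        ← Real.rpow_mul hp0.le]
      ring_nf
    have e3 : ((p:ℝ)^(ℓ-jj : ℕ)) = (p:ℝ) ^ (((ℓ-jj : ℕ):ℝ)) := by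
      rw [Real.rpow_natCast]
    rw [e2, e3, ← Real.rpow_add hp0]
    apply Real.rpow_le_rpow_of_exponent_le hp1'
    have c1 : ((ℓ - jj : ℕ) : ℝ) = (ℓ:ℝ) - jj := by
      rw [Nat.cast_sub hjl.le]
    have c2 : (((ℓ+jj)*d : ℕ) : ℝ) = ((ℓ:ℝ) + jj) * d := by push_cast; ring
    rw [c1, c2]
    have h1 : (0:ℝ) ≤ (ℓ:ℝ) - 1 - jj := by
      have : (jj:ℝ) + 1 ≤ (ℓ:ℝ) := by exact_mod_cast hjl
      linarith
    have h2 : (0:ℝ) ≤ (d:ℝ)/2 - 1 := by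
      have : (3:ℝ) ≤ (d:ℝ) := by exact_mod_cast hd
      linarith
    nlinarith [mul_nonneg h1 h2]
  calc ∑ s ∈ (univ : Finset (ZMod n)).erase 0, f s
      ≤ ∑ s ∈ (univ : Finset (ZMod n)).erase 0,
          Real.sqrt (((n:ℝ) * (p:ℝ)^(j s)) ^ d) := Finset.sum_le_sum hmono
    _ = ∑ jj ∈ Finset.range ℓ, ∑ s ∈ ((univ : Finset (ZMod n)).erase 0).filter
          (fun s => j s = jj), Real.sqrt (((n:ℝ) * (p:ℝ)^(j s)) ^ d) :=
        (Finset.sum_fiberwise_of_maps_to maps _).symm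
    _ ≤ ∑ jj ∈ Finset.range ℓ, (p:ℝ) ^ ((1:ℝ) + (2*(ℓ:ℝ)-1)*(d:ℝ)/2) := by
        apply Finset.sum_le_sum
        intro jj hjj
        have hjl : jj < ℓ := Finset.mem_range.1 hjj
        have const : ∀ s ∈ ((univ : Finset (ZMod n)).erase 0).filter (fun s => j s = jj),
            Real.sqrt (((n:ℝ) * (p:ℝ)^(j s)) ^ d)
              = Real.sqrt (((n:ℝ) * (p:ℝ)^jj) ^ d) := by
          intro s hs
          rw [(Finset.mem_filter.1 hs).2]
        rw [Finset.sum_congr rfl const, Finset.sum_const, nsmul_eq_mul]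
        have cardb : (((univ : Finset (ZMod n)).erase 0).filter (fun s => j s = jj)).card
            ≤ p ^ (ℓ - jj) := by
          calc (((univ : Finset (ZMod n)).erase 0).filter (fun s => j s = jj)).card
              ≤ ((univ : Finset (ZMod n)).filter (fun c => p^jj ∣ c.val)).card := by
                apply Finset.card_le_card
                intro s hs
                simp only [Finset.mem_filter, Finset.mem_erase, Finset.mem_univ,
                  true_and] at hs ⊢
                have h2 := (hgcd s hs.1.1).1
                rw [← hs.2, ← h2]
                exact Nat.gcd_dvd_left _ _
            _ ≤ n / p ^ jj := card_dvd_val_le _ (Nat.pow_pos (n := jj) hp.pos)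
                (pow_dvd_pow p hjl.le)
            _ = p ^ (ℓ - jj) := by rw [hn, Nat.pow_div hjl.le hp.pos]
        calc ((((univ : Finset (ZMod n)).erase 0).filter (fun s => j s = jj)).card : ℝ)
              * Real.sqrt (((n:ℝ) * (p:ℝ)^jj) ^ d)
            ≤ ((p:ℝ)^(ℓ-jj : ℕ)) * Real.sqrt (((n:ℝ) * (p:ℝ)^jj) ^ d) := by
              apply mul_le_mul_of_nonneg_right _ (Real.sqrt_nonneg _)
              exact_mod_cast cardb
          _ ≤ (p:ℝ) ^ ((1:ℝ) + (2*(ℓ:ℝ)-1)*(d:ℝ)/2) := keyineq jj hjj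
    _ = (ℓ : ℝ) * (p:ℝ) ^ ((1:ℝ) + (2*(ℓ:ℝ)-1)*(d:ℝ)/2) := by
        rw [Finset.sum_const, Finset.card_range, nsmul_eq_mul]

theorem stmt4 (p ℓ d : ℕ) [NeZero (p ^ ℓ)] (hp : p.Prime) (hodd : Odd p)
    (hl : 1 ≤ ℓ) (hd : 3 ≤ d)
    (E : Finset (Fin d → ZMod (p ^ ℓ)))
    (hE : (E.card : ℝ) >
      ((ℓ : ℝ) + 1) * ((p ^ ℓ : ℕ) : ℝ) ^
        ((2 * (ℓ : ℝ) - 1) * (d : ℝ) / (2 * (ℓ : ℝ)) + 1 / (ℓ : ℝ))) :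
    ∀ t : ZMod (p ^ ℓ), ∃ x ∈ E, ∃ y ∈ E, dot x y = t := by
  intro t
  classical
  have hp0 : (0:ℝ) < (p:ℝ) := by exact_mod_cast hp.pos
  have hl0 : (ℓ:ℝ) ≠ 0 := Nat.cast_ne_zero.2 (by omega)
  set M : ℝ := (p:ℝ) ^ ((1:ℝ) + (2*(ℓ:ℝ)-1)*(d:ℝ)/2) with hM
  have hM0 : 0 < M := Real.rpow_pos_of_pos hp0 _
  set N : ℕ := ((E ×ˢ E).filter fun z : (Fin d → ZMod (p^ℓ)) × (Fin d → ZMod (p^ℓ)) =>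
      dot z.1 z.2 = t).card with hN
  have hid := count_identity (n := p^ℓ) E t
  have split : ∑ s : ZMod (p^ℓ), ∑ x ∈ E, ∑ y ∈ E, chi (p^ℓ) (s * (dot x y - t))
      = (E.card : ℂ)^2 + ∑ s ∈ (Finset.univ : Finset (ZMod (p^ℓ))).erase 0,
          ∑ x ∈ E, ∑ y ∈ E, chi (p^ℓ) (s * (dot x y - t)) := by
    rw [← Finset.sum_erase_add _ _ (Finset.mem_univ 0), add_comm]
    congr 1
    have h1 : ∀ x ∈ E, ∀ y ∈ E, chi (p^ℓ) (0 * (dot x y - t)) = (1:ℂ) := by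
      intro x _ y _; rw [zero_mul, chi_zero]
    rw [Finset.sum_congr rfl (fun x hx => Finset.sum_congr rfl (h1 x hx))]
    simp only [Finset.sum_const, nsmul_eq_mul, mul_one]
    push_cast; ring
  have herr : ‖∑ s ∈ (Finset.univ : Finset (ZMod (p^ℓ))).erase 0,
      ∑ x ∈ E, ∑ y ∈ E, chi (p^ℓ) (s * (dot x y - t))‖
      ≤ (E.card:ℝ) * ((ℓ:ℝ) * M) := by
    calc ‖∑ s ∈ (Finset.univ : Finset (ZMod (p^ℓ))).erase 0,
        ∑ x ∈ E, ∑ y ∈ E, chi (p^ℓ) (s * (dot x y - t))‖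
        ≤ ∑ s ∈ (Finset.univ : Finset (ZMod (p^ℓ))).erase 0,
            ‖∑ x ∈ E, ∑ y ∈ E, chi (p^ℓ) (s * (dot x y - t))‖ :=
          norm_sum_le _ _
      _ ≤ ∑ s ∈ (Finset.univ : Finset (ZMod (p^ℓ))).erase 0,
            (E.card : ℝ) * Real.sqrt ((((p^ℓ:ℕ) : ℝ) *
              ((Finset.univ.filter fun c : ZMod (p^ℓ) => s * c = 0).card : ℝ)) ^ d) :=
          Finset.sum_le_sum (fun s _ => per_s_bound E t s)
      _ = (E.card : ℝ) * ∑ s ∈ (Finset.univ : Finset (ZMod (p^ℓ))).erase 0,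
            Real.sqrt ((((p^ℓ:ℕ) : ℝ) *
              ((Finset.univ.filter fun c : ZMod (p^ℓ) => s * c = 0).card : ℝ)) ^ d) := by
          rw [← Finset.mul_sum]
      _ ≤ (E.card:ℝ) * ((ℓ:ℝ) * M) := by
          apply mul_le_mul_of_nonneg_left _ (Nat.cast_nonneg _)
          exact fiber_sum_bound p ℓ d hp hl hd
  -- the key real inequality
  have keyC : ((((p^ℓ:ℕ):ℝ) * (N:ℝ) - (E.card:ℝ)^2 : ℝ) : ℂ)
      = ∑ s ∈ (Finset.univ : Finset (ZMod (p^ℓ))).erase 0,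
          ∑ x ∈ E, ∑ y ∈ E, chi (p^ℓ) (s * (dot x y - t)) := by
    have hC2 := hid.trans split
    rw [hN]
    push_cast
    push_cast at hC2
    linear_combination hC2
  have keyR : ((p^ℓ:ℕ):ℝ) * (N:ℝ) ≥ (E.card:ℝ)^2 - (E.card:ℝ) * ((ℓ:ℝ) * M) := by
    have h1 : |((p^ℓ:ℕ):ℝ) * (N:ℝ) - (E.card:ℝ)^2| ≤ (E.card:ℝ) * ((ℓ:ℝ) * M) := by
      rw [← Real.norm_eq_abs, ← Complex.norm_real, keyC]
      exact herr
    have := abs_le.1 h1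
    linarith [this.1]
  -- convert hE
  have hconv : ((p^ℓ:ℕ):ℝ) ^ ((2*(ℓ:ℝ)-1)*(d:ℝ)/(2*(ℓ:ℝ)) + 1/(ℓ:ℝ)) = M := by
    rw [hM]
    push_cast
    rw [← Real.rpow_natCast (p:ℝ) ℓ, ← Real.rpow_mul hp0.le]
    congr 1
    field_simp
    ring
  rw [hconv] at hE
  have hNpos : 0 < N := by
    rcases Nat.eq_zero_or_pos N with h0 | h
    · exfalso
      rw [h0] at keyR
      push_cast at keyR
      have hLM : (0:ℝ) < ((ℓ:ℝ)+1)*M := by positivity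
      have hE0 : (0:ℝ) < (E.card:ℝ) := lt_trans hLM hE
      nlinarith [mul_pos hE0 hM0]
    · exact h
  obtain ⟨z, hz⟩ := Finset.card_pos.1 hNpos
  simp only [Finset.mem_filter, Finset.mem_product] at hz
  exact ⟨z.1, hz.1.1, z.2, hz.1.2, hz.2⟩
end

section
/- Let n ≥ 3 be odd, E ⊆ ℤ_n^d, μ_y(t) = |{x ∈ E : x·y = t}|. Then ∑_{t ∈ ℤ_n} ∑_{y ∈ E} μ_y(t)² ≤ |E|³/n + τ(n)·n^{2d−1}·|E| / γ(n)^{d−1}. -/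
open Finset

set_option linter.unusedSectionVars false
set_option maxHeartbeats 1600000

noncomputable def ee {n : ℕ} (ζ : ℂ) (t : ZMod n) : ℂ := ζ ^ t.val

section Helpers

variable {n : ℕ} [NeZero n] {ζ : ℂ}

lemma ee_zero : ee ζ (0 : ZMod n) = 1 := by simp [ee]

lemma ee_add (hζ : IsPrimitiveRoot ζ n) (a b : ZMod n) :
    ee ζ (a + b) = ee ζ a * ee ζ b := by
  have h := pow_mod_orderOf ζ (a.val + b.val)
  rw [← hζ.eq_orderOf] at h
  rw [ee, ee, ee, ZMod.val_add, h, ← pow_add]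

lemma ee_conj (hζ : IsPrimitiveRoot ζ n) (t : ZMod n) :
    (starRingEnd ℂ) (ee ζ t) = ee ζ (-t) := by
  have h1 : ee ζ t * ee ζ (-t) = 1 := by
    rw [← ee_add hζ, add_neg_cancel, ee_zero]
  have hnorm : ‖ee ζ t‖ = 1 := by
    rw [ee, norm_pow, Complex.norm_eq_one_of_pow_eq_one (hζ.pow_eq_one) (NeZero.ne n), one_pow]
  rw [← Complex.inv_eq_conj hnorm]
  exact (eq_inv_of_mul_eq_one_left (by rw [mul_comm] at h1; exact h1)).symm

lemma ee_sum (hζ : IsPrimitiveRoot ζ n) {ι : Type*} (s : Finset ι) (f : ι → ZMod n) :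
    ee ζ (∑ i ∈ s, f i) = ∏ i ∈ s, ee ζ (f i) := by
  classical
  induction s using Finset.cons_induction with
  | empty => simp [ee_zero]
  | cons a s ha ih => rw [sum_cons, prod_cons, ee_add hζ, ih]

lemma ee_orth (hζ : IsPrimitiveRoot ζ n) (s : ZMod n) :
    ∑ j : ZMod n, ee ζ (j * s) = if s = 0 then (n : ℂ) else 0 := by
  split_ifs with hs
  · subst hs; simp [ee_zero, ZMod.card]
  · have key : ∀ j : ZMod n, ee ζ (j * s) = (ζ ^ s.val) ^ j.val := by
      intro j
      have h := pow_mod_orderOf ζ (j.val * s.val)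
      rw [← hζ.eq_orderOf] at h
      rw [ee, ZMod.val_mul, h, ← pow_mul, mul_comm j.val, pow_mul]
    simp_rw [key]
    set w := ζ ^ s.val with hw
    have hw1 : w ≠ 1 := by
      intro h
      have hdvd : n ∣ s.val := (hζ.pow_eq_one_iff_dvd s.val).mp h
      have hv0 : s.val = 0 := Nat.eq_zero_of_dvd_of_lt hdvd (ZMod.val_lt s)
      exact hs (by rwa [← ZMod.val_eq_zero])
    have hwn : w ^ n = 1 := by rw [hw, ← pow_mul, mul_comm, pow_mul, hζ.pow_eq_one, one_pow]
    have hbij : ∑ j : ZMod n, w ^ j.val = ∑ k ∈ range n, w ^ k := by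
      refine Finset.sum_nbij' (fun (j : ZMod n) => j.val) (fun k => (k : ZMod n))
        (fun a _ => mem_range.mpr (ZMod.val_lt a)) (fun a _ => mem_univ _)
        (fun a _ => ZMod.natCast_rightInverse a) (fun a ha => ZMod.val_cast_of_lt (mem_range.mp ha))
        (fun a _ => rfl)
    rw [hbij, geom_sum_eq hw1, hwn, sub_self, zero_div]

lemma ee_orth_pi (hζ : IsPrimitiveRoot ζ n) {d : ℕ} (z : Fin d → ZMod n) :
    ∑ y : Fin d → ZMod n, ee ζ (dot y z) = if z = 0 then (n : ℂ) ^ d else 0 := by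
  have h1 : ∀ y : Fin d → ZMod n, ee ζ (dot y z) = ∏ i, ee ζ (y i * z i) :=
    fun y => ee_sum hζ _ _
  simp_rw [h1]
  rw [← Fintype.prod_sum (fun i (a : ZMod n) => ee ζ (a * z i))]
  split_ifs with hz
  · subst hz
    simp_rw [Pi.zero_apply, mul_zero]
    simp [ee_zero, ZMod.card]
  · obtain ⟨i, hi⟩ := Function.ne_iff.mp hz
    refine Finset.prod_eq_zero (mem_univ i) ?_
    rw [ee_orth hζ]
    exact if_neg (by simpa using hi)

lemma countA {α : Type*} [DecidableEq α] (E : Finset α) (f : α → ZMod n) :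
    ∑ t : ZMod n, (E.filter fun x => f x = t).card ^ 2
      = ((E ×ˢ E).filter fun p => f p.1 = f p.2).card := by
  rw [Finset.card_eq_sum_card_fiberwise
    (f := fun p : α × α => f p.1) (t := (univ : Finset (ZMod n))) (fun x _ => mem_univ _)]
  refine Finset.sum_congr rfl fun t _ => ?_
  have hset : ((E ×ˢ E).filter (fun p => f p.1 = f p.2)).filter (fun p : α × α => f p.1 = t)
      = (E.filter fun x => f x = t) ×ˢ (E.filter fun x => f x = t) := by
    ext ⟨x, y⟩
    simp only [Finset.mem_filter, Finset.mem_product]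
    constructor
    · rintro ⟨⟨⟨hx, hy⟩, hxy⟩, hxt⟩
      exact ⟨⟨hx, hxt⟩, hy, hxy ▸ hxt⟩
    · rintro ⟨⟨hx, hxt⟩, hy, hyt⟩
      exact ⟨⟨⟨hx, hy⟩, hxt.trans hyt.symm⟩, hxt⟩
  rw [hset, Finset.card_product, sq]

lemma ker_card_le_s16 (j : ZMod n) :
    ((univ : Finset (ZMod n)).filter fun a => j * a = 0).card ≤ n.gcd j.val := by
  set g := n.gcd j.val with hg
  have hnpos : 0 < n := Nat.pos_of_ne_zero (NeZero.ne n)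
  have hgpos : 0 < g := Nat.gcd_pos_of_pos_left _ hnpos
  have hgn : g ∣ n := Nat.gcd_dvd_left _ _
  obtain ⟨n', hn'⟩ := hgn
  have hn'pos : 0 < n' := by
    rcases Nat.eq_zero_or_pos n' with h | h
    · rw [h, mul_zero] at hn'; omega
    · exact h
  have hker : ∀ a : ZMod n, j * a = 0 → n' ∣ a.val := by
    intro a ha
    have h0 : n ∣ j.val * a.val := by
      have hv := ZMod.val_mul j a
      rw [ha, ZMod.val_zero] at hv
      exact Nat.dvd_of_mod_eq_zero hv.symm
    obtain ⟨j', hj'⟩ := Nat.gcd_dvd_right n j.val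
    have hco : Nat.Coprime n' j' := by
      have h := Nat.coprime_div_gcd_div_gcd (m := n) (n := j.val) hgpos
      rw [← hg] at h hj'
      have e1 : n / g = n' := Nat.div_eq_of_eq_mul_left hgpos (by rw [hn', mul_comm])
      have e2 : j.val / g = j' := Nat.div_eq_of_eq_mul_left hgpos (by rw [hj', mul_comm])
      rwa [e1, e2] at h
    have h1 : n' ∣ j' * a.val := by
      have : g * n' ∣ g * (j' * a.val) := by
        rw [← hn', ← mul_assoc, ← hj']; exact h0
      exact (mul_dvd_mul_iff_left hgpos.ne').mp this
    exact hco.dvd_of_dvd_mul_left h1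
  have : ((univ : Finset (ZMod n)).filter fun a => j * a = 0).card
      ≤ (Finset.range g).card := by
    apply Finset.card_le_card_of_injOn (fun a => a.val / n')
    · intro a ha
      rw [mem_coe, mem_range]
      exact Nat.div_lt_of_lt_mul (by rw [mul_comm n' g, ← hn']; exact ZMod.val_lt a)
    · intro a ha b hb hab
      simp only [mem_coe, mem_filter] at ha hb
      have hab' : a.val / n' = b.val / n' := hab
      have h1 := Nat.div_mul_cancel (hker a ha.2)
      have h2 := Nat.div_mul_cancel (hker b hb.2)
      have : a.val = b.val := by rw [← h1, ← h2, hab']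
      exact ZMod.val_injective n this
  simpa using this

lemma gcd_le_div_minFac (hn : 2 ≤ n) {j : ZMod n} (hj : j ≠ 0) :
    n.gcd j.val ≤ n / n.minFac := by
  set g := n.gcd j.val with hg
  have hgn : g ∣ n := Nat.gcd_dvd_left _ _
  have hvpos : 0 < j.val := by
    rcases Nat.eq_zero_or_pos j.val with h | h
    · exact absurd ((ZMod.val_eq_zero _).mp h) hj
    · exact h
  have hglt : g < n :=
    lt_of_le_of_lt (Nat.le_of_dvd hvpos (Nat.gcd_dvd_right _ _)) (ZMod.val_lt j)
  have hgpos : 0 < g := Nat.gcd_pos_of_pos_left _ (by omega)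
  have hdivmul : n / g * g = n := Nat.div_mul_cancel hgn
  have h2 : 2 ≤ n / g := by
    rcases Nat.lt_or_ge (n / g) 2 with h | h
    · interval_cases h' : (n / g) <;> omega
    · exact h
  have hmf : n.minFac ≤ n / g := Nat.minFac_le_of_dvd h2 (Nat.div_dvd_of_dvd hgn)
  have hmfpos : 0 < n.minFac := Nat.minFac_pos n
  rw [Nat.le_div_iff_mul_le hmfpos]
  calc g * n.minFac ≤ g * (n / g) := Nat.mul_le_mul_left _ hmf
    _ = n := by rw [mul_comm]; exact hdivmul

lemma gcd_sum_le :
    ∑ j ∈ (univ : Finset (ZMod n)).erase 0, n.gcd j.val ≤ n.divisors.card * n := by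
  classical
  have hnpos : 0 < n := Nat.pos_of_ne_zero (NeZero.ne n)
  rw [← Finset.sum_fiberwise_of_maps_to
    (g := fun j : ZMod n => n.gcd j.val) (t := n.divisors)
    (fun j _ => Nat.mem_divisors.mpr ⟨Nat.gcd_dvd_left _ _, NeZero.ne n⟩)
    (f := fun j => n.gcd j.val)]
  calc ∑ g ∈ n.divisors, ∑ j ∈ ((univ : Finset (ZMod n)).erase 0).filter
        (fun j => n.gcd j.val = g), n.gcd j.val
      ≤ ∑ g ∈ n.divisors, n := by
        refine Finset.sum_le_sum fun g hg => ?_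
        obtain ⟨hgdvd, -⟩ := Nat.mem_divisors.mp hg
        have hgpos : 0 < g := Nat.pos_of_dvd_of_pos hgdvd hnpos
        have hcard : (((univ : Finset (ZMod n)).erase 0).filter
            (fun j => n.gcd j.val = g)).card ≤ n / g := by
          have := Finset.card_le_card_of_injOn (f := fun j : ZMod n => j.val / g)
            (s := ((univ : Finset (ZMod n)).erase 0).filter (fun j => n.gcd j.val = g))
            (t := Finset.range (n / g)) ?_ ?_
          · simpa using this
          · intro j hj
            simp only [mem_coe, mem_filter, mem_erase] at hj
            rw [mem_coe, mem_range]
            exact Nat.div_lt_div_of_lt_of_dvd hgdvd (ZMod.val_lt j)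
          · intro a ha b hb hab
            simp only [mem_coe, mem_filter] at ha hb
            have hda : g ∣ a.val := ha.2 ▸ Nat.gcd_dvd_right n a.val
            have hdb : g ∣ b.val := hb.2 ▸ Nat.gcd_dvd_right n b.val
            have hab' : a.val / g = b.val / g := hab
            have h1 := Nat.div_mul_cancel hda
            have h2 := Nat.div_mul_cancel hdb
            exact ZMod.val_injective n (by rw [← h1, ← h2, hab'])
        calc ∑ j ∈ ((univ : Finset (ZMod n)).erase 0).filter
              (fun j => n.gcd j.val = g), n.gcd j.val
            = ∑ j ∈ ((univ : Finset (ZMod n)).erase 0).filter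
              (fun j => n.gcd j.val = g), g := by
              refine Finset.sum_congr rfl fun j hj => ?_
              exact (Finset.mem_filter.mp hj).2
          _ = (((univ : Finset (ZMod n)).erase 0).filter
              (fun j => n.gcd j.val = g)).card * g := by rw [sum_const, smul_eq_mul]
          _ ≤ (n / g) * g := Nat.mul_le_mul_right _ hcard
          _ = n := Nat.div_mul_cancel hgdvd
    _ = n.divisors.card * n := by rw [sum_const, smul_eq_mul]

lemma fiber_le {d : ℕ} (E : Finset (Fin d → ZMod n)) (j : ZMod n) (x : Fin d → ZMod n) :
    (E.filter fun x' => ∀ i, j * (x i - x' i) = 0).card ≤ n.gcd j.val ^ d := by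
  classical
  calc (E.filter fun x' => ∀ i, j * (x i - x' i) = 0).card
      ≤ (Fintype.piFinset fun _ : Fin d =>
          (univ : Finset (ZMod n)).filter fun a => j * a = 0).card := by
        apply Finset.card_le_card_of_injOn (fun x' i => x i - x' i)
        · intro x' hx'
          rw [mem_coe, Fintype.mem_piFinset]
          intro i
          rw [mem_filter]
          exact ⟨mem_univ _, (mem_filter.mp hx').2 i⟩
        · intro a ha b hb hab
          funext i
          have h : x i - a i = x i - b i := congrFun hab i
          exact sub_right_inj.mp h
      _ = ((univ : Finset (ZMod n)).filter fun a => j * a = 0).card ^ d := by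
          rw [Fintype.card_piFinset_const]
      _ ≤ n.gcd j.val ^ d := Nat.pow_le_pow_left (ker_card_le_s16 j) d

lemma pairs_card_le {d : ℕ} (E : Finset (Fin d → ZMod n)) (j : ZMod n) :
    ((E ×ˢ E).filter fun p => ∀ i, j * (p.1 i - p.2 i) = 0).card
      ≤ E.card * n.gcd j.val ^ d := by
  classical
  rw [Finset.card_eq_sum_card_fiberwise (f := Prod.fst) (t := E)
    (fun p hp => (Finset.mem_product.mp (Finset.mem_filter.mp hp).1).1)]
  calc ∑ x ∈ E, (((E ×ˢ E).filter fun p => ∀ i, j * (p.1 i - p.2 i) = 0).filter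
        fun p => p.1 = x).card
      ≤ ∑ x ∈ E, n.gcd j.val ^ d := by
        refine Finset.sum_le_sum fun x hx => ?_
        refine le_trans ?_ (fiber_le E j x)
        apply Finset.card_le_card_of_injOn (fun p => p.2)
        · intro p hp
          simp only [mem_coe, mem_filter, mem_product] at hp ⊢
          obtain ⟨⟨⟨h1, h2⟩, h3⟩, h4⟩ := hp
          refine ⟨h2, fun i => ?_⟩
          rw [← h4]
          exact h3 i
        · intro p hp q hq hpq
          simp only [mem_coe, mem_filter] at hp hq
          have h1 : p.1 = q.1 := hp.2.trans hq.2.symm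
          have h2 : p.2 = q.2 := hpq
          exact Prod.ext h1 h2
      _ = E.card * n.gcd j.val ^ d := by rw [sum_const, smul_eq_mul]

lemma gcd_pow_sum_le (hn : 2 ≤ n) (e : ℕ) :
    ∑ j ∈ (univ : Finset (ZMod n)).erase 0, n.gcd j.val ^ (e+1)
      ≤ n.divisors.card * n * (n / n.minFac) ^ e := by
  calc ∑ j ∈ (univ : Finset (ZMod n)).erase 0, n.gcd j.val ^ (e+1)
      ≤ ∑ j ∈ (univ : Finset (ZMod n)).erase 0, (n / n.minFac) ^ e * n.gcd j.val := by
        refine sum_le_sum fun j hj => ?_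
        have hj0 : j ≠ 0 := (mem_erase.mp hj).1
        rw [pow_succ]
        exact Nat.mul_le_mul_right _ (Nat.pow_le_pow_left (gcd_le_div_minFac hn hj0) _)
    _ = (n / n.minFac) ^ e * ∑ j ∈ (univ : Finset (ZMod n)).erase 0, n.gcd j.val := by
        rw [mul_sum]
    _ ≤ (n / n.minFac) ^ e * (n.divisors.card * n) := Nat.mul_le_mul_left _ gcd_sum_le
    _ = n.divisors.card * n * (n / n.minFac) ^ e := by ring

lemma dot_smul {d : ℕ} (j : ZMod n) (x y : Fin d → ZMod n) :
    dot x (fun i => j * y i) = j * dot x y := by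
  simp only [dot, Finset.mul_sum]
  exact sum_congr rfl fun i _ => by ring

lemma dot_key {d : ℕ} (j : ZMod n) (x x' y : Fin d → ZMod n) :
    dot x (fun i => j * y i) - dot x' (fun i => j * y i)
      = dot y (fun i => j * (x i - x' i)) := by
  simp only [dot, Finset.mul_sum, ← Finset.sum_sub_distrib]
  exact sum_congr rfl fun i _ => by ring

lemma normSq_step (hζ : IsPrimitiveRoot ζ n) {d : ℕ} (E : Finset (Fin d → ZMod n))
    (m : Fin d → ZMod n) :
    ∑ p ∈ E ×ˢ E, ee ζ (dot p.1 m - dot p.2 m)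
      = (Complex.normSq (∑ x ∈ E, ee ζ (dot x m)) : ℂ) := by
  rw [Finset.sum_product]
  have h : ∀ x x' : Fin d → ZMod n,
      ee ζ (dot x m - dot x' m) = ee ζ (dot x m) * ee ζ (-(dot x' m)) := fun x x' => by
    rw [sub_eq_add_neg, ee_add hζ]
  simp_rw [h]
  rw [← Finset.sum_mul_sum]
  have hconj : ∑ x' ∈ E, ee ζ (-(dot x' m)) = (starRingEnd ℂ) (∑ x ∈ E, ee ζ (dot x m)) := by
    rw [map_sum]
    exact sum_congr rfl fun x _ => (ee_conj hζ _).symm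
  rw [hconj, Complex.mul_conj]

lemma key_per_y (hζ : IsPrimitiveRoot ζ n) {d : ℕ} (E : Finset (Fin d → ZMod n))
    (y : Fin d → ZMod n) :
    (n : ℂ) * (((E ×ˢ E).filter fun p => dot p.1 y = dot p.2 y).card : ℂ)
      = ∑ j : ZMod n,
          (Complex.normSq (∑ x ∈ E, ee ζ (dot x (fun i => j * y i))) : ℂ) := by
  have hstep : ∀ j : ZMod n,
      (Complex.normSq (∑ x ∈ E, ee ζ (dot x (fun i => j * y i))) : ℂ)
        = ∑ p ∈ E ×ˢ E, ee ζ (j * (dot p.1 y - dot p.2 y)) := by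
    intro j
    rw [← normSq_step hζ]
    exact sum_congr rfl fun p _ => by rw [mul_sub, ← dot_smul, ← dot_smul]
  simp_rw [hstep]
  rw [Finset.sum_comm]
  have horth : ∀ p ∈ E ×ˢ E, ∑ j : ZMod n, ee ζ (j * (dot p.1 y - dot p.2 y))
      = if dot p.1 y = dot p.2 y then (n : ℂ) else 0 := by
    intro p _
    rw [ee_orth hζ]
    congr 1
    simp [sub_eq_zero]
  rw [sum_congr rfl horth, sum_ite, sum_const_zero, add_zero, sum_const, nsmul_eq_mul, mul_comm]

lemma key_per_j (hζ : IsPrimitiveRoot ζ n) {d : ℕ} (E : Finset (Fin d → ZMod n))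
    (j : ZMod n) :
    ∑ y : Fin d → ZMod n,
        (Complex.normSq (∑ x ∈ E, ee ζ (dot x (fun i => j * y i))) : ℂ)
      = (n : ℂ) ^ d *
        (((E ×ˢ E).filter fun p => ∀ i, j * (p.1 i - p.2 i) = 0).card : ℂ) := by
  have hstep : ∀ y : Fin d → ZMod n,
      (Complex.normSq (∑ x ∈ E, ee ζ (dot x (fun i => j * y i))) : ℂ)
        = ∑ p ∈ E ×ˢ E, ee ζ (dot y (fun i => j * (p.1 i - p.2 i))) := by
    intro y
    rw [← normSq_step hζ]
    exact sum_congr rfl fun p _ => by rw [dot_key]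
  simp_rw [hstep]
  rw [Finset.sum_comm]
  have horth : ∀ p ∈ E ×ˢ E, ∑ y : Fin d → ZMod n, ee ζ (dot y (fun i => j * (p.1 i - p.2 i)))
      = if (∀ i, j * (p.1 i - p.2 i) = 0) then (n : ℂ) ^ d else 0 := by
    intro p _
    rw [ee_orth_pi hζ]
    congr 1
    simp [funext_iff]
  rw [sum_congr rfl horth, sum_ite, sum_const_zero, add_zero, sum_const, nsmul_eq_mul, mul_comm]

end Helpers

theorem main_aux (n : ℕ) [NeZero n] (hn3 : 3 ≤ n) (e : ℕ)
    (E : Finset (Fin (e+1) → ZMod n)) :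
    ∑ t : ZMod n, ∑ y ∈ E,
      ((E.filter (fun x => dot x y = t)).card : ℝ) ^ 2
      ≤ (E.card : ℝ) ^ 3 / (n : ℝ) +
        (n.divisors.card : ℝ) * (n : ℝ) ^ (2 * e + 1) * (E.card : ℝ) /
          (n.minFac : ℝ) ^ e := by
  classical
  obtain ⟨ζ, hζ⟩ : ∃ ζ : ℂ, IsPrimitiveRoot ζ n :=
    ⟨_, Complex.isPrimitiveRoot_exp n (NeZero.ne n)⟩
  have hn0 : (0:ℝ) < n := by exact_mod_cast (by omega : 0 < n)
  have hγ2 : 2 ≤ n.minFac := (Nat.minFac_prime (by omega : n ≠ 1)).two_le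
  have hγ0 : (0:ℝ) < n.minFac := by exact_mod_cast (by omega : 0 < n.minFac)
  -- Step 1 : rewrite LHS as a pair-count
  have hL : (∑ t : ZMod n, ∑ y ∈ E, ((E.filter (fun x => dot x y = t)).card : ℝ) ^ 2)
      = ∑ y ∈ E, ((((E ×ˢ E).filter fun p => dot p.1 y = dot p.2 y).card : ℕ) : ℝ) := by
    rw [Finset.sum_comm]
    refine sum_congr rfl fun y _ => ?_
    have h := countA (n := n) E (fun x => dot x y)
    calc ∑ t : ZMod n, ((E.filter (fun x => dot x y = t)).card : ℝ) ^ 2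
        = ((∑ t : ZMod n, (E.filter (fun x => dot x y = t)).card ^ 2 : ℕ) : ℝ) := by
          push_cast; rfl
      _ = _ := by rw [h]
  -- Step 2 : per-y Fourier identity over ℝ
  have hRy : ∀ y : Fin (e+1) → ZMod n,
      (n:ℝ) * (((E ×ˢ E).filter fun p => dot p.1 y = dot p.2 y).card : ℝ)
        = ∑ j : ZMod n, Complex.normSq (∑ x ∈ E, ee ζ (dot x (fun i => j * y i))) := by
    intro y
    have h := key_per_y hζ E y
    apply Complex.ofReal_injective
    push_cast
    push_cast at h
    exact h
  -- Step 3 : split off j = 0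
  have hsplit : ∀ y : Fin (e+1) → ZMod n,
      ∑ j : ZMod n, Complex.normSq (∑ x ∈ E, ee ζ (dot x (fun i => j * y i)))
        = (E.card:ℝ)^2 + ∑ j ∈ (univ : Finset (ZMod n)).erase 0,
            Complex.normSq (∑ x ∈ E, ee ζ (dot x (fun i => j * y i))) := by
    intro y
    rw [← Finset.add_sum_erase _ _ (mem_univ (0 : ZMod n))]
    congr 1
    have hdot : ∀ x : Fin (e+1) → ZMod n, dot x (fun i => (0:ZMod n) * y i) = 0 := by
      intro x; simp [dot]
    have h0 : (∑ x ∈ E, ee ζ (dot x (fun i => (0:ZMod n) * y i))) = ((E.card : ℝ) : ℂ) := by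
      rw [Finset.sum_congr rfl fun x _ => by rw [hdot x, ee_zero]]
      rw [sum_const, nsmul_eq_mul, mul_one]
      push_cast
      rfl
    rw [h0, Complex.normSq_ofReal, sq]
  -- abbreviation for the error term
  set R : ℝ := ∑ y ∈ E, ∑ j ∈ (univ : Finset (ZMod n)).erase 0,
      Complex.normSq (∑ x ∈ E, ee ζ (dot x (fun i => j * y i))) with hRdef
  have hmain : (n:ℝ) * ∑ y ∈ E, ((((E ×ˢ E).filter fun p => dot p.1 y = dot p.2 y).card : ℕ) : ℝ)
      = (E.card:ℝ)^3 + R := by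
    rw [Finset.mul_sum]
    calc ∑ y ∈ E, (n:ℝ) * (((E ×ˢ E).filter fun p => dot p.1 y = dot p.2 y).card : ℝ)
        = ∑ y ∈ E, ((E.card:ℝ)^2 + ∑ j ∈ (univ : Finset (ZMod n)).erase 0,
            Complex.normSq (∑ x ∈ E, ee ζ (dot x (fun i => j * y i)))) := by
          exact sum_congr rfl fun y _ => by rw [hRy y, hsplit y]
      _ = (E.card:ℝ)^3 + R := by
          rw [sum_add_distrib, sum_const, nsmul_eq_mul, hRdef]
          ring
  -- Step 4 : bound R
  have hRb : R ≤ (n:ℝ)^(e+1) * (E.card:ℝ) *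
      ((n.divisors.card:ℝ) * (n:ℝ) * ((n / n.minFac : ℕ) : ℝ)^e) := by
    have h1 : R ≤ ∑ y : Fin (e+1) → ZMod n, ∑ j ∈ (univ : Finset (ZMod n)).erase 0,
        Complex.normSq (∑ x ∈ E, ee ζ (dot x (fun i => j * y i))) := by
      refine Finset.sum_le_sum_of_subset_of_nonneg (subset_univ E) ?_
      intro y _ _
      exact sum_nonneg fun j _ => Complex.normSq_nonneg _
    rw [Finset.sum_comm] at h1
    refine h1.trans ?_
    have h2 : ∀ j ∈ (univ : Finset (ZMod n)).erase 0,
        ∑ y : Fin (e+1) → ZMod n, Complex.normSq (∑ x ∈ E, ee ζ (dot x (fun i => j * y i)))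
          ≤ (n:ℝ)^(e+1) * ((E.card:ℝ) * (n.gcd j.val : ℝ)^(e+1)) := by
      intro j hj
      have hk := key_per_j hζ E j
      have hkr : ∑ y : Fin (e+1) → ZMod n,
          Complex.normSq (∑ x ∈ E, ee ζ (dot x (fun i => j * y i)))
            = (n:ℝ)^(e+1)
              * ((((E ×ˢ E).filter fun p => ∀ i, j * (p.1 i - p.2 i) = 0).card : ℕ) : ℝ) := by
        apply Complex.ofReal_injective
        push_cast
        push_cast at hk
        exact hk
      rw [hkr]
      have hq : ((((E ×ˢ E).filter fun p => ∀ i, j * (p.1 i - p.2 i) = 0).card : ℕ) : ℝ)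
          ≤ (E.card:ℝ) * (n.gcd j.val : ℝ)^(e+1) := by
        exact_mod_cast pairs_card_le E j
      exact mul_le_mul_of_nonneg_left hq (by positivity)
    refine (Finset.sum_le_sum h2).trans ?_
    rw [← Finset.mul_sum, mul_assoc]
    refine mul_le_mul_of_nonneg_left ?_ (by positivity)
    rw [← Finset.mul_sum]
    refine mul_le_mul_of_nonneg_left ?_ (by positivity)
    have h3 := gcd_pow_sum_le (n := n) (by omega) e
    calc ∑ j ∈ (univ : Finset (ZMod n)).erase 0, ((n.gcd j.val : ℕ) : ℝ) ^ (e+1)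
        = ((∑ j ∈ (univ : Finset (ZMod n)).erase 0, n.gcd j.val ^ (e+1) : ℕ) : ℝ) := by
          push_cast; rfl
      _ ≤ (((n.divisors.card * n * (n / n.minFac) ^ e : ℕ)) : ℝ) := by
          exact_mod_cast h3
      _ = (n.divisors.card:ℝ) * (n:ℝ) * ((n / n.minFac : ℕ) : ℝ)^e := by push_cast; ring
  -- Step 5 : conclude
  rw [hL]
  have hsum : ∑ y ∈ E, ((((E ×ˢ E).filter fun p => dot p.1 y = dot p.2 y).card : ℕ) : ℝ)
      = ((E.card:ℝ)^3 + R) / n := by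
    rw [eq_div_iff (ne_of_gt hn0)]
    rw [mul_comm] at hmain
    exact hmain
  rw [hsum, add_div]
  have hcast : ((n / n.minFac : ℕ) : ℝ) ≤ (n:ℝ) / (n.minFac:ℝ) := Nat.cast_div_le
  have hpow : ((n / n.minFac : ℕ) : ℝ)^e ≤ ((n:ℝ) / (n.minFac:ℝ))^e :=
    pow_le_pow_left₀ (by positivity) hcast _
  have hfinal : (n:ℝ)^(e+1) * (E.card:ℝ) *
      ((n.divisors.card:ℝ) * (n:ℝ) * ((n / n.minFac : ℕ) : ℝ)^e) / n
      ≤ (n.divisors.card : ℝ) * (n : ℝ) ^ (2 * e + 1) * (E.card : ℝ) /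
          (n.minFac : ℝ) ^ e := by
    have step1 : (n:ℝ)^(e+1) * (E.card:ℝ) *
        ((n.divisors.card:ℝ) * (n:ℝ) * ((n / n.minFac : ℕ) : ℝ)^e) / n
        ≤ (n:ℝ)^(e+1) * (E.card:ℝ) *
        ((n.divisors.card:ℝ) * (n:ℝ) * ((n:ℝ) / (n.minFac:ℝ))^e) / n := by
      gcongr
    refine step1.trans (le_of_eq ?_)
    rw [div_pow]
    have hpe : (n:ℝ)^(2*e+1) = (n:ℝ)^(e+1) * (n:ℝ)^e := by
      rw [← pow_add]
      congr 1
      omega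
    rw [hpe]
    field_simp
  calc (E.card:ℝ)^3 / n + R / n
      ≤ (E.card:ℝ)^3 / n + (n:ℝ)^(e+1) * (E.card:ℝ) *
          ((n.divisors.card:ℝ) * (n:ℝ) * ((n / n.minFac : ℕ) : ℝ)^e) / n := by
        gcongr
    _ ≤ _ := add_le_add le_rfl hfinal

theorem stmt16 (n d : ℕ) [NeZero n] (hodd : Odd n) (hn3 : 3 ≤ n) (hd : 1 ≤ d)
    (E : Finset (Fin d → ZMod n)) :
    ∑ t : ZMod n, ∑ y ∈ E,
      ((E.filter (fun x => dot x y = t)).card : ℝ) ^ 2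
      ≤ (E.card : ℝ) ^ 3 / (n : ℝ) +
        (n.divisors.card : ℝ) * (n : ℝ) ^ (2 * d - 1) * (E.card : ℝ) /
          (n.minFac : ℝ) ^ (d - 1) := by
  obtain ⟨e, rfl⟩ : ∃ e, d = e + 1 := ⟨d - 1, (Nat.succ_pred_eq_of_pos hd).symm⟩
  have h := main_aux n hn3 e E
  have h1 : 2 * (e + 1) - 1 = 2 * e + 1 := by omega
  have h2 : (e + 1) - 1 = e := by omega
  rw [h1, h2]
  exact h
end
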